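/- arXiv:1201.6049 — 2 statements merged into one kernel-verified Lean document; each statement's English description precedes it below -/
import Mathlib

section
/- For any finite simple graph G and any injective function f: V → ℝ, the sum of the indices of f equals the sum of the indices of −f: ∑_v (1 − χ(S_f^-(v))) = ∑_v (1 − χ(S_f^+(v))), where S_f^+(v) is induced by neighbors w with f(w) > f(v). -/
open Finset

attribute [local instance] Classical.propDecidable

variable {V : Type*}

/-- Number of complete subgraphs `K_k` of `G` whose vertex set lies inside `A`. -/
noncomputable def cliquesIn [Fintype V] (G : SimpleGraph V) (k : ℕ) (A : Finset V) : ℕ :=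
  ((G.cliqueFinset k).filter (fun s => s ⊆ A)).card

/-- Euler characteristic of the subgraph of `G` induced on `A`. -/
noncomputable def eulerCharOn [Fintype V] (G : SimpleGraph V) (A : Finset V) : ℤ :=
  ∑ k ∈ Finset.range (Fintype.card V + 1), (-1 : ℤ) ^ k * (cliquesIn G (k + 1) A : ℤ)

/-- Euler characteristic of `G`. -/
noncomputable def eulerChar [Fintype V] (G : SimpleGraph V) : ℤ :=
  eulerCharOn G Finset.univ

/-- Curvature of `G` at `v`. -/
noncomputable def curvature [Fintype V] (G : SimpleGraph V) (v : V) : ℚ :=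
  ∑ k ∈ Finset.range (Fintype.card V + 1),
    (-1 : ℚ) ^ k * (cliquesIn G k (G.neighborFinset v) : ℚ) / (k + 1)

/-- Exit set: neighbors of `v` with smaller `f`-value. -/
noncomputable def exitSet [Fintype V] (G : SimpleGraph V) (f : V → ℝ) (v : V) : Finset V :=
  (G.neighborFinset v).filter (fun w => f w < f v)

/-- Entrance set: neighbors of `v` with larger `f`-value. -/
noncomputable def enterSet [Fintype V] (G : SimpleGraph V) (f : V → ℝ) (v : V) : Finset V :=
  (G.neighborFinset v).filter (fun w => f v < f w)

/-- Poincaré–Hopf index of `f` at `v`. -/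
noncomputable def indexOf [Fintype V] (G : SimpleGraph V) (f : V → ℝ) (v : V) : ℤ :=
  1 - eulerCharOn G (exitSet G f v)

lemma mem_exitSet [Fintype V] {G : SimpleGraph V} {f : V → ℝ} {v w : V} :
    w ∈ exitSet G f v ↔ G.Adj v w ∧ f w < f v := by
  simp [exitSet]

lemma sum_cliquesIn_exit [Fintype V] (G : SimpleGraph V) (f : V → ℝ)
    (hf : Function.Injective f) (m : ℕ) :
    ∑ v : V, (cliquesIn G m (exitSet G f v) : ℤ) = ((G.cliqueFinset (m + 1)).card : ℤ) := by
  classical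
  have key : ∑ v : V, cliquesIn G m (exitSet G f v) = (G.cliqueFinset (m + 1)).card := by
    unfold cliquesIn
    rw [← Finset.card_sigma]
    apply Finset.card_bij (fun p _ => insert p.1 p.2)
    · rintro ⟨v, s⟩ hp
      rw [Finset.mem_sigma, Finset.mem_filter, SimpleGraph.mem_cliqueFinset_iff] at hp
      obtain ⟨-, hs, hsub⟩ := hp
      rw [SimpleGraph.mem_cliqueFinset_iff]
      exact hs.insert (fun b hb => (mem_exitSet.1 (hsub hb)).1)
    · rintro ⟨v, s⟩ hp ⟨v', s'⟩ hp' heq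
      rw [Finset.mem_sigma, Finset.mem_filter] at hp hp'
      have hvs : ∀ w ∈ s, f w < f v := fun w hw => (mem_exitSet.1 (hp.2.2 hw)).2
      have hvs' : ∀ w ∈ s', f w < f v' := fun w hw => (mem_exitSet.1 (hp'.2.2 hw)).2
      have hv : v = v' := by
        by_contra hne
        have h1 : v ∈ insert v' s' := heq ▸ Finset.mem_insert_self v s
        have h2 : v' ∈ insert v s := heq ▸ Finset.mem_insert_self v' s'
        rcases Finset.mem_insert.1 h1 with h | h
        · exact hne h
        · rcases Finset.mem_insert.1 h2 with h' | h'
          · exact hne h'.symm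
          · exact absurd (hvs' v h) (not_lt.2 (le_of_lt (hvs v' h')))
      subst hv
      have hvns : v ∉ s := fun h => lt_irrefl _ (hvs v h)
      have hvns' : v ∉ s' := fun h => lt_irrefl _ (hvs' v h)
      have : s = s' := by
        have := congrArg (fun t => Finset.erase t v) heq
        simpa [Finset.erase_insert hvns, Finset.erase_insert hvns'] using this
      simp [this]
    · intro t ht
      rw [SimpleGraph.mem_cliqueFinset_iff] at ht
      have hne : t.Nonempty := Finset.card_pos.1 (ht.2 ▸ Nat.succ_pos m)
      obtain ⟨v, hv, hmax⟩ := Finset.exists_max_image t f hne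
      refine ⟨⟨v, t.erase v⟩, ?_, ?_⟩
      · rw [Finset.mem_sigma, Finset.mem_filter, SimpleGraph.mem_cliqueFinset_iff]
        refine ⟨Finset.mem_univ _, ⟨ht.1.subset (Finset.erase_subset _ _), ?_⟩, ?_⟩
        · rw [Finset.card_erase_of_mem hv, ht.2]; rfl
        · intro w hw
          have hwne : w ≠ v := Finset.ne_of_mem_erase hw
          have hwt : w ∈ t := Finset.mem_of_mem_erase hw
          rw [mem_exitSet]
          refine ⟨(ht.1 hv hwt (Ne.symm hwne)), ?_⟩
          exact lt_of_le_of_ne (hmax w hwt) (fun h => hwne (hf h))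
      · exact Finset.insert_erase hv
  exact_mod_cast key

lemma enterSet_eq_exit_neg [Fintype V] (G : SimpleGraph V) (f : V → ℝ) (v : V) :
    enterSet G f v = exitSet G (fun x => -f x) v := by
  unfold enterSet exitSet
  apply Finset.filter_congr
  intro w _
  simp [neg_lt_neg_iff]

set_option maxHeartbeats 1000000 in
/-- The index sum for `f` equals the index sum for `-f`:
`∑_v (1 - χ(S_f^-(v))) = ∑_v (1 - χ(S_f^+(v)))`. -/
theorem index_sum_symmetric [Fintype V] (G : SimpleGraph V) (f : V → ℝ)
    (hf : Function.Injective f) :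
    ∑ v : V, (1 - eulerCharOn G (exitSet G f v)) =
      ∑ v : V, (1 - eulerCharOn G (enterSet G f v)) := by
  
  have main : ∀ (g : V → ℝ), Function.Injective g →
      ∑ v : V, eulerCharOn G (exitSet G g v) =
        ∑ k ∈ Finset.range (Fintype.card V + 1),
          (-1 : ℤ) ^ k * ((G.cliqueFinset (k + 2)).card : ℤ) := by
    intro g hg
    unfold eulerCharOn
    rw [Finset.sum_comm]
    apply Finset.sum_congr rfl
    intro k _
    rw [← Finset.mul_sum, sum_cliquesIn_exit G g hg (k + 1)]
  have h1 := main f hf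
  have h2 := main (fun x => -f x) (fun a b h => hf (by simpa using neg_injective h))
  simp only [Finset.sum_sub_distrib]
  congr 1
  rw [h1, ← h2]
  apply Finset.sum_congr rfl
  intro v _
  rw [enterSet_eq_exit_neg]
end

section
/- For any finite simple graph G and injective f: V → ℝ, 2·∑_v i_f(v) = 2·v_0 − ∑_v (χ(S_f^+(v)) + χ(S_f^-(v))), where the summand combination is symmetric under replacing f by −f. -/
/-! Every `(k + 2)`-clique of `G` is counted exactly once in `∑ v, #{(k + 1)-cliques of S_f^-(v)}`,
namely at its vertex of largest `f`-value, and likewise once in the sum over `S_f^+(v)`, at its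
vertex of smallest `f`-value. Hence `∑ v, χ(S_f^+(v)) = ∑ v, χ(S_f^-(v))`, and the identity is
the definition of `i_f` summed over `v` and doubled. -/

open Finset

attribute [local instance] Classical.propDecidable

variable {V : Type*}

section StrictMax

variable {α : Type*} [LinearOrder α]

def IsStrictMaxIn (f : V → α) (t : Finset V) (v : V) : Prop :=
  v ∈ t ∧ ∀ w ∈ t.erase v, f w < f v

lemma existsUnique_isStrictMaxIn {f : V → α} {t : Finset V} (ht : t.Nonempty)
    (hf : Set.InjOn f t) : ∃! v, IsStrictMaxIn f t v := by
  obtain ⟨v, hv, hmax⟩ := t.exists_max_image f ht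
  refine ⟨v, ⟨hv, fun w hw => ?_⟩, fun u ⟨hu, hu_max⟩ => ?_⟩
  · obtain ⟨hwv, hw⟩ := mem_erase.1 hw
    exact (hmax w hw).lt_of_ne fun h => hwv (hf hw hv h)
  · by_contra huv
    exact (hmax u hu).not_gt (hu_max v (mem_erase.2 ⟨Ne.symm huv, hv⟩))

lemma sum_card_filter_isStrictMaxIn [Fintype V] {f : V → α} (hf : Function.Injective f)
    {S : Finset (Finset V)} (hS : ∀ t ∈ S, t.Nonempty) :
    ∑ v : V, #{t ∈ S | IsStrictMaxIn f t v} = #S := by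
  refine (sum_card_bipartiteAbove_eq_sum_card_bipartiteBelow
    (r := fun v t => IsStrictMaxIn f t v)).trans ?_
  rw [card_eq_sum_ones]
  refine sum_congr rfl fun t ht => card_eq_one.2 ?_
  obtain ⟨v, hv, huniq⟩ := existsUnique_isStrictMaxIn (hS t ht) hf.injOn
  exact ⟨v, eq_singleton_iff_unique_mem.2 ⟨by simpa [bipartiteBelow] using hv,
    fun u hu => huniq u (by simpa [bipartiteBelow] using hu)⟩⟩

end StrictMax

lemma cliquesIn_exitSet [Fintype V] (G : SimpleGraph V) (f : V → ℝ) (v : V) (n : ℕ) :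
    cliquesIn G n (exitSet G f v) = #{t ∈ G.cliqueFinset (n + 1) | IsStrictMaxIn f t v} := by
  have hv : v ∉ exitSet G f v := by simp [exitSet]
  refine card_nbij' (insert v) (erase · v) (fun s hs => ?_) (fun t ht => ?_)
    (fun s hs => erase_insert fun h => hv ((mem_filter.1 hs).2 h))
    (fun t ht => insert_erase (mem_filter.1 ht).2.1)
  · obtain ⟨hs, hsv⟩ := mem_filter.1 hs
    have hexit : ∀ w ∈ s, G.Adj v w ∧ f w < f v := fun w hw => by
      simpa [exitSet] using hsv hw
    refine mem_filter.2 ⟨G.mem_cliqueFinset_iff.2 ?_, mem_insert_self v s, fun w hw => ?_⟩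
    · exact (G.mem_cliqueFinset_iff.1 hs).insert fun w hw => (hexit w hw).1
    · obtain ⟨hwv, hw⟩ := mem_erase.1 hw
      exact (hexit w ((mem_insert.1 hw).resolve_left hwv)).2
  · obtain ⟨ht, hvt, htop⟩ := mem_filter.1 ht
    have hclique := G.mem_cliqueFinset_iff.1 ht
    refine mem_filter.2 ⟨G.mem_cliqueFinset_iff.2 (hclique.erase_of_mem hvt), fun w hw => ?_⟩
    obtain ⟨hwv, hwt⟩ := mem_erase.1 hw
    simpa [exitSet] using ⟨hclique.isClique hvt hwt (Ne.symm hwv), htop w hw⟩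

lemma sum_cliquesIn_exitSet [Fintype V] (G : SimpleGraph V) {f : V → ℝ}
    (hf : Function.Injective f) (n : ℕ) :
    ∑ v : V, cliquesIn G n (exitSet G f v) = #(G.cliqueFinset (n + 1)) := by
  simp_rw [cliquesIn_exitSet]
  refine sum_card_filter_isStrictMaxIn hf fun t ht => ?_
  rw [← card_pos, ((G.mem_cliqueFinset_iff).1 ht).card_eq]
  exact n.succ_pos

lemma sum_eulerCharOn_exitSet [Fintype V] (G : SimpleGraph V) {f : V → ℝ}
    (hf : Function.Injective f) :
    ∑ v : V, eulerCharOn G (exitSet G f v) =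
      ∑ k ∈ range (Fintype.card V + 1), (-1 : ℤ) ^ k * #(G.cliqueFinset (k + 2)) := by
  unfold eulerCharOn
  rw [sum_comm]
  refine sum_congr rfl fun k _ => ?_
  rw [← mul_sum, ← Nat.cast_sum, sum_cliquesIn_exitSet G hf]

lemma enterSet_eq_exitSet_neg [Fintype V] (G : SimpleGraph V) (f : V → ℝ) (v : V) :
    enterSet G f v = exitSet G (-f) v := by
  simp [enterSet, exitSet]

lemma sum_eulerCharOn_enterSet [Fintype V] (G : SimpleGraph V) {f : V → ℝ}
    (hf : Function.Injective f) :
    ∑ v : V, eulerCharOn G (enterSet G f v) = ∑ v : V, eulerCharOn G (exitSet G f v) := by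
  simp_rw [enterSet_eq_exitSet_neg G f]
  rw [sum_eulerCharOn_exitSet G (f := -f) (neg_injective.comp hf), sum_eulerCharOn_exitSet G hf]

/-- For any finite simple graph `G` and injective `f : V → ℝ`,
`2 ∑_v i_f(v) = 2 v_0 - ∑_v (χ(S_f^+(v)) + χ(S_f^-(v)))`. -/
theorem index_sum_doubled [Fintype V] (G : SimpleGraph V) (f : V → ℝ)
    (hf : Function.Injective f) :
    2 * ∑ v : V, indexOf G f v =
      2 * (Fintype.card V : ℤ)
        - ∑ v : V, (eulerCharOn G (enterSet G f v) + eulerCharOn G (exitSet G f v)) := by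
  rw [sum_add_distrib, sum_eulerCharOn_enterSet G hf]
  simp only [indexOf, sum_sub_distrib, sum_const, card_univ, nsmul_eq_mul, mul_one]
  ring
end
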